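/- Quotient property of Schur complements: for a 3×3 block matrix M with blocks M_{ij} (i,j ∈ {1,2,3}) where M11 and the Schur complement of M11 in the top-left 2×2 block submatrix are invertible, the Schur complement of the top-left 2×2 block submatrix in M equals the Schur complement of (M/M11)_{11} in M/M11, where M/M11 denotes the Schur complement of M11 in M. -/

import Mathlib

/-!
Invert the leading 2×2 block `[[M11, M12], [M21, M22]]` by its Schur complement formula. Multiplying
by the row `[M31 M32]` from the left collapses the inverse to the row
`[M31 M11⁻¹ - X S⁻¹ M21 M11⁻¹,  X S⁻¹]` with `X = M32 - M31 M11⁻¹ M12`, and multiplying that by the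
column `[M13; M23]` gives `M31 M11⁻¹ M13 + X S⁻¹ (M23 - M21 M11⁻¹ M13)`, which is the claim.
-/

namespace Matrix

variable {l m n o α : Type*} [Fintype m] [Fintype n] [DecidableEq m] [DecidableEq n] [CommRing α]

theorem fromCols_mul_invOf_fromBlocks₁₁ (A : Matrix m m α) (B : Matrix m n α)
    (C : Matrix n m α) (D : Matrix n n α) (G : Matrix l m α) (H : Matrix l n α)
    [Invertible A] [Invertible (D - C * ⅟A * B)] [Invertible (fromBlocks A B C D)] :
    fromCols G H * ⅟(fromBlocks A B C D) =
      fromCols (G * ⅟A - (H - G * ⅟A * B) * ⅟(D - C * ⅟A * B) * C * ⅟A)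
        ((H - G * ⅟A * B) * ⅟(D - C * ⅟A * B)) := by
  rw [invOf_fromBlocks₁₁_eq, fromCols_mul_fromBlocks]
  congr 1
  · simp only [Matrix.mul_add, Matrix.sub_mul, Matrix.mul_neg, Matrix.mul_assoc]
    abel
  · simp only [Matrix.sub_mul, Matrix.mul_neg, Matrix.mul_assoc]
    abel

theorem sub_fromCols_mul_invOf_fromBlocks₁₁_mul_fromRows (A : Matrix m m α) (B : Matrix m n α)
    (C : Matrix n m α) (D : Matrix n n α) (E : Matrix m o α) (F : Matrix n o α)
    (G : Matrix l m α) (H : Matrix l n α) (J : Matrix l o α)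
    [Invertible A] [Invertible (D - C * ⅟A * B)] [Invertible (fromBlocks A B C D)] :
    J - fromCols G H * ⅟(fromBlocks A B C D) * fromRows E F =
      (J - G * ⅟A * E) - (H - G * ⅟A * B) * ⅟(D - C * ⅟A * B) * (F - C * ⅟A * E) := by
  rw [fromCols_mul_invOf_fromBlocks₁₁, fromCols_mul_fromRows]
  simp only [Matrix.sub_mul, Matrix.mul_sub, Matrix.mul_assoc]
  abel

end Matrix

theorem schur_quotient_property {K : Type*} [Field K] {p₁ p₂ p₃ : ℕ}
    (M11 : Matrix (Fin p₁) (Fin p₁) K) (M12 : Matrix (Fin p₁) (Fin p₂) K)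
    (M13 : Matrix (Fin p₁) (Fin p₃) K)
    (M21 : Matrix (Fin p₂) (Fin p₁) K) (M22 : Matrix (Fin p₂) (Fin p₂) K)
    (M23 : Matrix (Fin p₂) (Fin p₃) K)
    (M31 : Matrix (Fin p₃) (Fin p₁) K) (M32 : Matrix (Fin p₃) (Fin p₂) K)
    (M33 : Matrix (Fin p₃) (Fin p₃) K)
    [Invertible M11] [Invertible (M22 - M21 * M11⁻¹ * M12)] :
    M33 - Matrix.fromCols M31 M32 * (Matrix.fromBlocks M11 M12 M21 M22)⁻¹ *
        Matrix.fromRows M13 M23 =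
      (M33 - M31 * M11⁻¹ * M13) -
        (M32 - M31 * M11⁻¹ * M12) * (M22 - M21 * M11⁻¹ * M12)⁻¹ *
          (M23 - M21 * M11⁻¹ * M13) := by
  have : Invertible (M22 - M21 * ⅟M11 * M12) := by
    rwa [Matrix.invOf_eq_nonsing_inv]
  have := Matrix.fromBlocks₁₁Invertible M11 M12 M21 M22
  simpa only [Matrix.invOf_eq_nonsing_inv] using
    Matrix.sub_fromCols_mul_invOf_fromBlocks₁₁_mul_fromRows M11 M12 M21 M22 M13 M23 M31 M32 M33
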